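/- Phragmén's ordered method satisfies the following proportionality criterion: let 1 ≤ ℓ ≤ M and let D ⊆ C be a set of ℓ candidates. If the total number of ballots whose first ℓ entries form exactly the set D (in any order) is greater than (ℓ/(M+1))·V, then every possible outcome E of Phragmén's ordered method for M seats contains all ℓ candidates of D, i.e. D ⊆ E. -/

import Mathlib

open Finset

/-- The top candidate of the ballot `α` given the set `E` of already elected
candidates: the first entry of `α` not in `E` (if any). -/
def topOf {C : Type} [DecidableEq C] (E : Finset C) (α : List C) : Option C :=
  α.find? (fun c => decide (c ∉ E))

/-- The set of voters whose ballot is currently counted for candidate `i`,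
given the set `E` of already elected candidates. -/
def poCounted {C : Type} [Fintype C] [DecidableEq C] {n : ℕ}
    (b : Fin n → List C) (E : Finset C) (i : C) : Finset (Fin n) :=
  Finset.univ.filter (fun k => topOf E (b k) = some i)

/-- Phragmén's `t_i = (1 + Σ_{α∈A_i} v_α r_α)/(Σ_{α∈A_i} v_α)` for the current
loads `r` and elected set `E` (each individual ballot has weight 1). -/
def poT {C : Type} [Fintype C] [DecidableEq C] {n : ℕ}
    (b : Fin n → List C) (r : Fin n → ℚ) (E : Finset C) (i : C) : ℚ :=
  (1 + ∑ k ∈ poCounted b E i, r k) / ((poCounted b E i).card : ℚ)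

/-- The ballot loads after electing the candidates in the list `l`
(most recently elected first). -/
def poLoads {C : Type} [Fintype C] [DecidableEq C] {n : ℕ}
    (b : Fin n → List C) : List C → Fin n → ℚ
  | [], _ => 0
  | i :: l, k =>
      if topOf l.toFinset (b k) = some i then poT b (poLoads b l) l.toFinset i
      else poLoads b l k

/-- `l` (most recently elected first) is a valid sequence of elections for
Phragmén's ordered method. -/
def poValid {C : Type} [Fintype C] [DecidableEq C] {n : ℕ}
    (b : Fin n → List C) : List C → Prop
  | [] => True
  | i :: l => poValid b l ∧ i ∉ l ∧ 0 < (poCounted b l.toFinset i).card ∧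
      ∀ j : C, j ∉ l → 0 < (poCounted b l.toFinset j).card →
        poT b (poLoads b l) l.toFinset i ≤ poT b (poLoads b l) l.toFinset j

/-- `S` is a possible outcome of Phragmén's ordered method for `M` seats. -/
def POOutcome {C : Type} [Fintype C] [DecidableEq C] {n : ℕ}
    (b : Fin n → List C) (M : ℕ) (S : Finset C) : Prop :=
  ∃ l : List C, poValid b l ∧ l.length = M ∧ l.toFinset = S

/-!
Let `s` be the `t`-value at which the last seat is filled. Loads only grow, never exceed `s`, and
always sum to the number of elected candidates. Suppose some `d ∈ D` is not elected and let `W` be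
the group of ballots starting with `D`. Every election of a member of `D` raises the total load by
exactly `1`, and no other election touches `W`, so `W` carries load at most `ℓ - 1`. Moreover `W`
could have bought a member of `D` at the last step: averaging over the members of `D` not yet
elected, one of them, `d'`, is the top choice of a part `W'` of `W` with
`|W| (1 + load W') ≤ ℓ |W'|`, and `s ≤ t_{d'}` then gives `|W| s ≤ ℓ`. Hence
`M ≤ ℓ - 1 + (n - |W|) s ≤ ℓ - 1 + (n - |W|) ℓ / |W|`, that is `(M + 1) |W| ≤ ℓ n`.
-/

theorem Finset.sum_fiberwise_of_forall_eq_some {ι κ M : Type*} [DecidableEq κ]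
    [AddCommMonoid M] {s : Finset ι} {t : Finset κ} {g : ι → Option κ}
    (h : ∀ i ∈ s, ∃ c ∈ t, g i = some c) (f : ι → M) :
    ∑ c ∈ t, ∑ i ∈ s with g i = some c, f i = ∑ i ∈ s, f i := by
  rw [← sum_fiberwise_of_maps_to (t := t.map .some) (g := g) ?_ f, sum_map]
  · rfl
  · intro i hi
    obtain ⟨c, hc, hgc⟩ := h i hi
    exact mem_map.mpr ⟨c, hc, hgc.symm⟩

section

variable {ι K : Type*} [DecidableEq ι] [CommRing K] [LinearOrder K] [IsStrictOrderedRing K]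
  {A B : Finset ι} {r : ι → K} {s : K}

theorem mul_card_le_of_subset (hBA : B ⊆ A) (hA : s * #A ≤ 1 + ∑ k ∈ A, r k)
    (hr : ∀ k ∈ A \ B, r k ≤ s) : s * #B ≤ 1 + ∑ k ∈ B, r k := by
  have hsum : ∑ k ∈ A \ B, r k ≤ #(A \ B) * s := by
    simpa using sum_le_sum hr
  have hcard : (#(A \ B) : K) + #B = #A := by exact_mod_cast card_sdiff_add_card_eq_card hBA
  rw [← sum_sdiff hBA, ← hcard] at hA
  linarith

theorem mul_card_le_of_superset (hBA : B ⊆ A) (hB : s * #B ≤ 1 + ∑ k ∈ B, r k)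
    (hr : ∀ k ∈ A \ B, s ≤ r k) : s * #A ≤ 1 + ∑ k ∈ A, r k := by
  have hsum : #(A \ B) * s ≤ ∑ k ∈ A \ B, r k := by
    simpa using sum_le_sum hr
  have hcard : (#(A \ B) : K) + #B = #A := by exact_mod_cast card_sdiff_add_card_eq_card hBA
  rw [← sum_sdiff hBA, ← hcard]
  linarith

end

section

variable {C : Type} [DecidableEq C] {E : Finset C} {β : List C} {c i : C}

theorem notMem_of_topOf_eq_some (h : topOf E β = some c) : c ∉ E := by
  simpa using List.find?_some h

theorem topOf_cons (a : C) : topOf E (a :: β) = if a ∈ E then topOf E β else some a := by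
  by_cases ha : a ∈ E <;> simp [topOf, ha]

theorem topOf_insert_of_ne (hci : c ≠ i) (h : topOf E β = some c) :
    topOf (insert i E) β = some c := by
  induction β with
  | nil => simp [topOf] at h
  | cons a β ih =>
    by_cases ha : a ∈ E
    · simp_all [topOf_cons]
    · obtain rfl : a = c := by simpa [topOf_cons, ha] using h
      simp [topOf_cons, ha, hci]

theorem topOf_eq_some_or_of_topOf_insert (h : topOf (insert i E) β = some c) :
    topOf E β = some c ∨ topOf E β = some i := by
  induction β with
  | nil => simp [topOf] at h
  | cons a β ih =>
    by_cases ha : a ∈ E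
    · simp_all [topOf_cons]
    · by_cases hai : a = i
      · subst hai; simp [topOf_cons, ha]
      · simp_all [topOf_cons]

theorem exists_mem_topOf_eq_some_of_take {D : Finset C} {m : ℕ}
    (hβ : (β.take m).toFinset = D) (hDE : ¬ D ⊆ E) : ∃ d ∈ D, topOf E β = some d := by
  obtain ⟨d₀, hd₀D, hd₀E⟩ := not_subset.mp hDE
  have hd₀ : d₀ ∈ β.take m := by rw [← List.mem_toFinset, hβ]; exact hd₀D
  obtain ⟨d, hd⟩ : ∃ d, (β.take m).find? (fun c => decide (c ∉ E)) = some d :=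
    Option.isSome_iff_exists.mp (List.find?_isSome.mpr ⟨d₀, hd₀, by simpa using hd₀E⟩)
  refine ⟨d, ?_, ?_⟩
  · rw [← hβ, List.mem_toFinset]; exact List.mem_of_find?_eq_some hd
  · rw [topOf, ← List.take_append_drop m β, List.find?_append, hd]; rfl

theorem exists_fiber_mul_le {n m : ℕ} {b : Fin n → List C} {W : Finset (Fin n)} {D : Finset C}
    {r : Fin n → ℚ} (hW : ∀ k ∈ W, ((b k).take m).toFinset = D)
    (hDE : ¬ D ⊆ E) (hr : ∑ k ∈ W, r k ≤ #(E ∩ D)) :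
    ∃ c ∈ D \ E, #W * (1 + ∑ k ∈ W with topOf E (b k) = some c, r k) ≤
      #D * #{k ∈ W | topOf E (b k) = some c} := by
  have hfib : ∀ k ∈ W, ∃ c ∈ D \ E, topOf E (b k) = some c := by
    intro k hk
    obtain ⟨c, hcD, hc⟩ := exists_mem_topOf_eq_some_of_take (hW k hk) hDE
    exact ⟨c, mem_sdiff.mpr ⟨hcD, notMem_of_topOf_eq_some hc⟩, hc⟩
  have hcardD : (#(D \ E) : ℚ) + #(E ∩ D) = #D := by
    rw [inter_comm]; exact_mod_cast card_sdiff_add_card_inter D E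
  have hcardW : ∑ c ∈ D \ E, (#{k ∈ W | topOf E (b k) = some c} : ℚ) = #W := by
    simpa using sum_fiberwise_of_forall_eq_some hfib (fun _ => (1 : ℚ))
  apply exists_le_of_sum_le (sdiff_nonempty.mpr hDE)
  rw [← mul_sum, ← mul_sum, sum_add_distrib, sum_fiberwise_of_forall_eq_some hfib, hcardW,
    sum_const, nsmul_one]
  nlinarith [mul_le_mul_of_nonneg_left hr (Nat.cast_nonneg (α := ℚ) #W)]

end

section

variable {C : Type} [Fintype C] [DecidableEq C] {n : ℕ} {b : Fin n → List C}
  {l : List C} {E : Finset C} {i j : C} {k : Fin n}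

theorem mem_poCounted : k ∈ poCounted b E i ↔ topOf E (b k) = some i := by
  simp [poCounted]

variable (b) in
def poLastT : List C → ℚ
  | [] => 0
  | i :: l => poT b (poLoads b l) l.toFinset i

theorem poLoads_cons_of_mem (hk : k ∈ poCounted b l.toFinset i) :
    poLoads b (i :: l) k = poLastT b (i :: l) := by
  simp [poLoads, mem_poCounted.mp hk, poLastT]

theorem poLoads_cons_of_notMem (hk : k ∉ poCounted b l.toFinset i) :
    poLoads b (i :: l) k = poLoads b l k := by
  simp [poLoads, mem_poCounted.not.mp hk]

theorem poT_nonneg {r : Fin n → ℚ} (hr : ∀ k, 0 ≤ r k) : 0 ≤ poT b r E i :=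
  div_nonneg (add_nonneg zero_le_one (sum_nonneg fun k _ => hr k)) (Nat.cast_nonneg _)

theorem poLoads_nonneg (l : List C) (k : Fin n) : 0 ≤ poLoads b l k := by
  induction l generalizing k with
  | nil => exact le_rfl
  | cons i l ih =>
    unfold poLoads
    split
    · exact poT_nonneg ih
    · exact ih k

theorem poLastT_nonneg (l : List C) : 0 ≤ poLastT b l := by
  cases l with
  | nil => exact le_rfl
  | cons i l => exact poT_nonneg (poLoads_nonneg l)

theorem card_mul_poLastT_cons (hA : 0 < #(poCounted b l.toFinset i)) :
    #(poCounted b l.toFinset i) * poLastT b (i :: l) =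
      1 + ∑ k ∈ poCounted b l.toFinset i, poLoads b l k := by
  have hAQ : (0 : ℚ) < #(poCounted b l.toFinset i) := by exact_mod_cast hA
  simp only [poLastT, poT]
  field_simp

theorem poLastT_cons_mul_card_le (hv : poValid b (i :: l)) (hj : j ∉ l) :
    poLastT b (i :: l) * #(poCounted b l.toFinset j) ≤
      1 + ∑ k ∈ poCounted b l.toFinset j, poLoads b l k := by
  rcases (#(poCounted b l.toFinset j)).eq_zero_or_pos with h0 | hpos
  · simp [card_eq_zero.mp h0]
  · have hposQ : (0 : ℚ) < #(poCounted b l.toFinset j) := by exact_mod_cast hpos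
    have hmin : poLastT b (i :: l) ≤ poT b (poLoads b l) l.toFinset j := hv.2.2.2 j hj hpos
    rwa [poT, le_div_iff₀ hposQ] at hmin

theorem poLastT_le_poLastT_cons (hv : poValid b (i :: l)) :
    poLastT b l ≤ poLastT b (i :: l) := by
  obtain ⟨hvl, hil, hpos, -⟩ := hv
  cases l with
  | nil => exact poLastT_nonneg _
  | cons j l =>
    obtain ⟨hij, hil'⟩ : i ≠ j ∧ i ∉ l := by simpa using hil
    set A := poCounted b (j :: l).toFinset i
    set A' := poCounted b l.toFinset i
    have hA'A : A' ⊆ A := fun k hk => mem_poCounted.mpr <| by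
      rw [List.toFinset_cons]; exact topOf_insert_of_ne hij (mem_poCounted.mp hk)
    have hA' : poLastT b (j :: l) * #A' ≤ 1 + ∑ k ∈ A', poLoads b (j :: l) k := by
      rw [sum_congr rfl fun k hk => poLoads_cons_of_notMem ?_]
      · exact poLastT_cons_mul_card_le hvl hil'
      · rw [mem_poCounted, mem_poCounted.mp hk]
        simpa using hij
    -- the ballots that join `A` when `j` is elected carry the load `poLastT b (j :: l)`
    have hjoin : ∀ k ∈ A \ A', poLastT b (j :: l) ≤ poLoads b (j :: l) k := by
      intro k hk
      obtain ⟨hkA, hkA'⟩ := mem_sdiff.mp hk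
      rw [mem_poCounted, List.toFinset_cons] at hkA
      rcases topOf_eq_some_or_of_topOf_insert hkA with h | h
      · exact absurd (mem_poCounted.mpr h) hkA'
      · exact (poLoads_cons_of_mem (mem_poCounted.mpr h)).ge
    have hAQ : (0 : ℚ) < #A := by exact_mod_cast hpos
    change _ ≤ poT b _ _ i
    rw [poT, le_div_iff₀ hAQ]
    exact mul_card_le_of_superset hA'A hA' hjoin

theorem poLoads_le_poLastT (hv : poValid b l) : poLoads b l k ≤ poLastT b l := by
  induction l with
  | nil => exact le_rfl
  | cons i l ih =>
    by_cases hk : k ∈ poCounted b l.toFinset i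
    · exact (poLoads_cons_of_mem hk).le
    · rw [poLoads_cons_of_notMem hk]
      exact (ih hv.1).trans (poLastT_le_poLastT_cons hv)

theorem poLoads_le_poLoads_cons (hv : poValid b (i :: l)) :
    poLoads b l k ≤ poLoads b (i :: l) k := by
  by_cases hk : k ∈ poCounted b l.toFinset i
  · rw [poLoads_cons_of_mem hk]
    exact (poLoads_le_poLastT hv.1).trans (poLastT_le_poLastT_cons hv)
  · rw [poLoads_cons_of_notMem hk]

theorem sum_poLoads_cons (hA : 0 < #(poCounted b l.toFinset i)) :
    ∑ k, poLoads b (i :: l) k = ∑ k, poLoads b l k + 1 := by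
  rw [← sum_add_sum_compl (poCounted b l.toFinset i),
    ← sum_add_sum_compl (poCounted b l.toFinset i) (poLoads b l),
    sum_congr rfl fun k hk => poLoads_cons_of_mem hk,
    sum_congr rfl fun k hk => poLoads_cons_of_notMem (mem_compl.mp hk),
    sum_const, nsmul_eq_mul, card_mul_poLastT_cons hA]
  ring

theorem sum_poLoads (hv : poValid b l) : ∑ k, poLoads b l k = l.length := by
  induction l with
  | nil => simp [poLoads]
  | cons i l ih =>
    rw [sum_poLoads_cons hv.2.2.1, ih hv.1, List.length_cons]
    push_cast
    ring

section

variable {W : Finset (Fin n)} {D : Finset C} {m : ℕ}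

theorem sum_poLoads_le_card_inter (hW : ∀ k ∈ W, ((b k).take m).toFinset = D)
    (hv : poValid b l) (hDl : ¬ D ⊆ l.toFinset) :
    ∑ k ∈ W, poLoads b l k ≤ #(l.toFinset ∩ D) := by
  induction l with
  | nil => simp [poLoads]
  | cons i l ih =>
    have hDl' : ¬ D ⊆ l.toFinset := fun h => hDl (h.trans (by simp [subset_insert]))
    have ih := ih hv.1 hDl'
    by_cases hiD : i ∈ D
    · have hgrow : ∑ k ∈ W, (poLoads b (i :: l) k - poLoads b l k) ≤ 1 := calc
        _ ≤ ∑ k, (poLoads b (i :: l) k - poLoads b l k) :=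
          sum_le_sum_of_subset_of_nonneg (subset_univ W) fun k _ _ =>
            sub_nonneg.mpr (poLoads_le_poLoads_cons hv)
        _ = 1 := by rw [sum_sub_distrib, sum_poLoads_cons hv.2.2.1]; ring
      have hcard : #((i :: l).toFinset ∩ D) = #(l.toFinset ∩ D) + 1 := by
        rw [List.toFinset_cons, insert_inter_of_mem hiD,
          card_insert_of_notMem (by simp [hv.2.1])]
      rw [sum_sub_distrib] at hgrow
      push_cast [hcard]
      linarith
    · have hsame : ∀ k ∈ W, poLoads b (i :: l) k = poLoads b l k := by
        intro k hk
        obtain ⟨d, hdD, hd⟩ := exists_mem_topOf_eq_some_of_take (hW k hk) hDl'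
        refine poLoads_cons_of_notMem fun hk' => hiD ?_
        rw [mem_poCounted, hd, Option.some_inj] at hk'
        exact hk' ▸ hdD
      rw [sum_congr rfl hsame, List.toFinset_cons, insert_inter_of_notMem hiD]
      exact ih

theorem card_mul_poLastT_le_card (hW : ∀ k ∈ W, ((b k).take m).toFinset = D)
    (hv : poValid b l) (hDl : ¬ D ⊆ l.toFinset) : #W * poLastT b l ≤ #D := by
  cases l with
  | nil => simp [poLastT]
  | cons i l =>
    have hDl' : ¬ D ⊆ l.toFinset := fun h => hDl (h.trans (by simp [subset_insert]))
    obtain ⟨c, hc, hcW⟩ := exists_fiber_mul_le hW hDl' (sum_poLoads_le_card_inter hW hv.1 hDl')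
    set B := {k ∈ W | topOf l.toFinset (b k) = some c}
    have hBA : B ⊆ poCounted b l.toFinset c := fun k hk => mem_poCounted.mpr (mem_filter.mp hk).2
    have hcl : c ∉ l := by simpa using (mem_sdiff.mp hc).2
    have hB : poLastT b (i :: l) * #B ≤ 1 + ∑ k ∈ B, poLoads b l k :=
      mul_card_le_of_subset hBA (poLastT_cons_mul_card_le hv hcl)
        fun k _ => (poLoads_le_poLastT hv.1).trans (poLastT_le_poLastT_cons hv)
    rcases (#B).eq_zero_or_pos with h0 | hpos
    · have hW0 : (#W : ℚ) = 0 := by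
        simp only [card_eq_zero.mp h0, sum_empty, card_empty, Nat.cast_zero, add_zero, mul_one,
          mul_zero] at hcW
        linarith [(Nat.cast_nonneg (α := ℚ) #W)]
      simp [hW0]
    · have hBQ : (0 : ℚ) < #B := by exact_mod_cast hpos
      refine le_of_mul_le_mul_right ?_ hBQ
      nlinarith [mul_le_mul_of_nonneg_left hB (Nat.cast_nonneg (α := ℚ) #W)]

end

end

theorem stmt_14_general {C : Type} [Fintype C] [DecidableEq C] (n : ℕ)
    (b : Fin n → List C) (M : ℕ) (ℓ : ℕ) (D : Finset C) (hD : D.card = ℓ)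
    (hbig : (ℓ : ℚ) * (n : ℚ) < ((M : ℚ) + 1) *
      ((Finset.univ.filter fun k : Fin n => ((b k).take ℓ).toFinset = D).card : ℚ)) :
    ∀ E : Finset C, POOutcome b M E → D ⊆ E := by
  rintro _ ⟨l, hv, rfl, rfl⟩
  by_contra hDl
  set W := Finset.univ.filter fun k : Fin n => ((b k).take ℓ).toFinset = D
  have hW : ∀ k ∈ W, ((b k).take ℓ).toFinset = D := fun k hk => (mem_filter.mp hk).2
  set s := poLastT b l
  have hWs : #W * s ≤ ℓ := hD ▸ card_mul_poLastT_le_card hW hv hDl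
  have hloadW : ∑ k ∈ W, poLoads b l k + 1 ≤ ℓ := by
    have hlt : #(l.toFinset ∩ D) < ℓ :=
      hD ▸ card_lt_card ⟨inter_subset_right, fun h => hDl (h.trans inter_subset_left)⟩
    have hltQ : (#(l.toFinset ∩ D) : ℚ) + 1 ≤ ℓ := by exact_mod_cast hlt
    linarith [sum_poLoads_le_card_inter hW hv hDl]
  have hloadWc : ∑ k ∈ Wᶜ, poLoads b l k ≤ #Wᶜ * s := by
    simpa using sum_le_sum fun k (_ : k ∈ Wᶜ) => poLoads_le_poLastT (k := k) hv
  have hcard : (#Wᶜ : ℚ) + #W = n := by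
    exact_mod_cast (card_compl_add_card W).trans (Fintype.card_fin n)
  have htotal : ∑ k ∈ W, poLoads b l k + ∑ k ∈ Wᶜ, poLoads b l k = l.length := by
    rw [sum_add_sum_compl, sum_poLoads hv]
  have hM : (l.length : ℚ) + 1 ≤ ℓ + #Wᶜ * s := by linarith
  nlinarith [mul_le_mul_of_nonneg_left hM (Nat.cast_nonneg (α := ℚ) #W),
    mul_le_mul_of_nonneg_left hWs (Nat.cast_nonneg (α := ℚ) #Wᶜ)]

/-- Proportionality of Phragmén's ordered method: if `1 ≤ ℓ ≤ M`, `D` is a set of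
`ℓ` candidates, and more than `(ℓ/(M+1))·V` of the voters cast ballots whose first
`ℓ` entries form exactly the set `D` (in any order), then every possible outcome
`E` for `M` seats contains all of `D`. -/
theorem stmt_14 {C : Type} [Fintype C] [DecidableEq C] (n : ℕ)
    (b : Fin n → List C) (hb : ∀ k, (b k).Nodup) (hbne : ∀ k, b k ≠ [])
    (M : ℕ) (hM1 : 1 ≤ M) (hM2 : M ≤ Fintype.card C)
    (ℓ : ℕ) (hl1 : 1 ≤ ℓ) (hl2 : ℓ ≤ M)
    (D : Finset C) (hD : D.card = ℓ)
    (hbig : (ℓ : ℚ) * (n : ℚ) < ((M : ℚ) + 1) *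
      ((Finset.univ.filter fun k : Fin n => ((b k).take ℓ).toFinset = D).card : ℚ)) :
    ∀ E : Finset C, POOutcome b M E → D ⊆ E :=
  stmt_14_general n b M ℓ D hD hbig
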